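/- For the ordered star S on vertex set {1,2,3,4} with edges {1,4},{2,4},{3,4} (center last), the canonical Ramsey number satisfies ER(S) = 6; for the ordered star S' on {1,2,3,4} with edges {1,3},{2,3},{3,4} (center third), ER(S') = 5. In each case, every edge-coloring of the ordered complete graph on ER many vertices contains a canonically colored copy, and there exists an edge-coloring of the ordered complete graph on one vertex fewer with no canonically colored copy. -/

import Mathlib

/-- Given an ordered graph on `Fin m` whose edge list `E` consists of pairs `(a, b)` with
`a < b`, an order-preserving injection `f : Fin m → Fin n`, and an edge-coloring `χ` of the
ordered complete graph on `Fin n`, the copy of the graph given by `f` is *canonically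
colored* if it is monochromatic, rainbow, lower lexicographic (two edges of the copy get
the same color iff they have the same smaller endpoint), or upper lexicographic (two edges
of the copy get the same color iff they have the same larger endpoint). -/
def CanonicalCopy {m n : ℕ} (E : List (Fin m × Fin m)) (χ : Sym2 (Fin n) → ℕ)
    (f : Fin m → Fin n) : Prop :=
  (∀ e ∈ E, ∀ e' ∈ E, χ s(f e.1, f e.2) = χ s(f e'.1, f e'.2)) ∨
  (∀ e ∈ E, ∀ e' ∈ E, χ s(f e.1, f e.2) = χ s(f e'.1, f e'.2) → e = e') ∨
  (∀ e ∈ E, ∀ e' ∈ E, (χ s(f e.1, f e.2) = χ s(f e'.1, f e'.2) ↔ e.1 = e'.1)) ∨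
  (∀ e ∈ E, ∀ e' ∈ E, (χ s(f e.1, f e.2) = χ s(f e'.1, f e'.2) ↔ e.2 = e'.2))

/-- The edge-coloring `χ` of the ordered complete graph on `Fin n` contains a canonically
colored copy of the ordered graph on `Fin m` with edge list `E`: a copy is given by an
order-preserving (strictly monotone) injection `f : Fin m → Fin n`. -/
def HasCanonicalCopy {m : ℕ} (E : List (Fin m × Fin m)) (n : ℕ)
    (χ : Sym2 (Fin n) → ℕ) : Prop :=
  ∃ f : Fin m → Fin n, StrictMono f ∧ CanonicalCopy E χ f

/-- The ordered star on `{1,2,3,4}` with edges `{1,4},{2,4},{3,4}` (center last),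
0-indexed. -/
def starS : List (Fin 4 × Fin 4) := [(0, 3), (1, 3), (2, 3)]

/-- The ordered star on `{1,2,3,4}` with edges `{1,3},{2,3},{3,4}` (center third),
0-indexed. -/
def starS' : List (Fin 4 × Fin 4) := [(0, 2), (1, 2), (2, 3)]

/-!
A copy of the star `S` is three leaves below a centre, so all its edges share the larger
endpoint and it is canonical iff the three leaf colours are all equal or pairwise distinct; among
the five edges to the last vertex of `K₆` such a triple exists by pigeonhole (`5 > 2 · 2`).
A copy `a < b < c < d` of `S'` is canonical iff `χ ac = χ bc` or its three colours are distinct.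
In `K₅` take `c, d` to be the last two vertices: among the edges from `c` to the first three
vertices, either two share a colour, or two have distinct colours both different from `χ cd`.
Colouring each edge by the parity of its smaller endpoint defeats both stars one vertex earlier.
-/

theorem canonicalCopy_starS_iff {n : ℕ} (χ : Sym2 (Fin n) → ℕ) (f : Fin 4 → Fin n) :
    CanonicalCopy starS χ f ↔
      (χ s(f 0, f 3) = χ s(f 1, f 3) ∧ χ s(f 1, f 3) = χ s(f 2, f 3)) ∨
      (χ s(f 0, f 3) ≠ χ s(f 1, f 3) ∧ χ s(f 0, f 3) ≠ χ s(f 2, f 3) ∧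
        χ s(f 1, f 3) ≠ χ s(f 2, f 3)) := by
  simp only [CanonicalCopy, starS, List.mem_cons, List.not_mem_nil, or_false, forall_eq_or_imp,
    forall_eq, true_and, and_true, imp_self, Prod.mk.injEq, zero_ne_one, imp_false, Fin.reduceEq,
    one_ne_zero, iff_false, iff_true, or_self_left, ne_eq]
  omega

theorem canonicalCopy_starS'_iff {n : ℕ} (χ : Sym2 (Fin n) → ℕ) (f : Fin 4 → Fin n) :
    CanonicalCopy starS' χ f ↔
      χ s(f 0, f 2) = χ s(f 1, f 2) ∨
      (χ s(f 0, f 2) ≠ χ s(f 1, f 2) ∧ χ s(f 0, f 2) ≠ χ s(f 2, f 3) ∧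
        χ s(f 1, f 2) ≠ χ s(f 2, f 3)) := by
  simp only [CanonicalCopy, starS', List.mem_cons, List.not_mem_nil, or_false, forall_eq_or_imp,
    forall_eq, true_and, and_true, imp_self, Prod.mk.injEq, zero_ne_one, imp_false, Fin.reduceEq,
    and_self, one_ne_zero, iff_false, iff_true, or_self_left, ne_eq]
  omega

theorem strictMono_fin_four_iff {α : Type*} [Preorder α] (f : Fin 4 → α) :
    StrictMono f ↔ f 0 < f 1 ∧ f 1 < f 2 ∧ f 2 < f 3 := by
  simp [Fin.strictMono_iff_lt_succ, Fin.forall_fin_succ]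

theorem Finset.exists_subset_card_eq_const_or_injOn {α β : Type*} [DecidableEq β] (c : α → β)
    (s : Finset α) {k : ℕ} (hs : k ^ 2 < s.card) :
    ∃ t ⊆ s, t.card = k + 1 ∧ ((∀ x ∈ t, ∀ y ∈ t, c x = c y) ∨ Set.InjOn c t) := by
  by_cases hk : k + 1 ≤ (s.image c).card
  · obtain ⟨u, hus, hinj, himg⟩ := exists_subset_injOn_image_eq_of_surjOn (↑s) (s.image c)
      (by rw [coe_image]; exact Set.surjOn_image c s)
    have hu : (s.image c).card = u.card := by rw [← himg, card_image_of_injOn hinj]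
    obtain ⟨t, htu, ht⟩ := exists_subset_card_eq (hk.trans_eq hu)
    exact ⟨t, htu.trans (by exact_mod_cast hus), ht, Or.inr (hinj.mono (by exact_mod_cast htu))⟩
  · obtain ⟨y, -, hy⟩ := exists_lt_card_fiber_of_mul_lt_card_of_maps_to (n := k)
      (fun a ha => mem_image_of_mem c ha) (by nlinarith)
    obtain ⟨t, hts, ht⟩ := exists_subset_card_eq hy
    refine ⟨t, hts.trans (filter_subset _ s), ht, Or.inl fun x hx x' hx' => ?_⟩
    exact (mem_filter.1 (hts hx)).2.trans (mem_filter.1 (hts hx')).2.symm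

theorem exists_pair_eq_or_distinct_avoiding {β : Type*} (x : Fin 3 → β) (z : β) :
    ∃ i j : Fin 3, i < j ∧ (x i = x j ∨ (x i ≠ x j ∧ x i ≠ z ∧ x j ≠ z)) := by
  by_cases h01 : x 0 = x 1; · exact ⟨0, 1, by decide, .inl h01⟩
  by_cases h02 : x 0 = x 2; · exact ⟨0, 2, by decide, .inl h02⟩
  by_cases h12 : x 1 = x 2; · exact ⟨1, 2, by decide, .inl h12⟩
  by_cases h0 : x 0 = z
  · exact ⟨1, 2, by decide, .inr ⟨h12, fun h => h01 (h0.trans h.symm),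
      fun h => h02 (h0.trans h.symm)⟩⟩
  by_cases h1 : x 1 = z
  · exact ⟨0, 2, by decide, .inr ⟨h02, h0, fun h => h12 (h1.trans h.symm)⟩⟩
  exact ⟨0, 1, by decide, .inr ⟨h01, h0, h1⟩⟩

theorem hasCanonicalCopy_starS_six (χ : Sym2 (Fin 6) → ℕ) : HasCanonicalCopy starS 6 χ := by
  obtain ⟨t, -, ht, hc⟩ := Finset.exists_subset_card_eq_const_or_injOn
    (fun i : Fin 5 => χ s(i.castSucc, Fin.last 5)) Finset.univ (k := 2) (by simp)
  set g := t.orderEmbOfFin ht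
  have hg : ∀ i, g i ∈ t := t.orderEmbOfFin_mem ht
  refine ⟨![(g 0).castSucc, (g 1).castSucc, (g 2).castSucc, Fin.last 5],
    (strictMono_fin_four_iff _).2 ⟨Fin.castSucc_lt_castSucc_iff.2 (g.strictMono (by decide)),
      Fin.castSucc_lt_castSucc_iff.2 (g.strictMono (by decide)), Fin.castSucc_lt_last _⟩, ?_⟩
  rw [canonicalCopy_starS_iff]
  rcases hc with hconst | hinj
  · exact .inl ⟨hconst _ (hg 0) _ (hg 1), hconst _ (hg 1) _ (hg 2)⟩
  · exact .inr ⟨hinj.ne (hg 0) (hg 1) (g.injective.ne (by decide)),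
      hinj.ne (hg 0) (hg 2) (g.injective.ne (by decide)),
      hinj.ne (hg 1) (hg 2) (g.injective.ne (by decide))⟩

theorem hasCanonicalCopy_starS'_five (χ : Sym2 (Fin 5) → ℕ) :
    HasCanonicalCopy starS' 5 χ := by
  obtain ⟨i, j, hij, hx⟩ := exists_pair_eq_or_distinct_avoiding
    (fun i : Fin 3 => χ s(Fin.castLE (by norm_num) i, 3)) (χ s(3, 4))
  refine ⟨![Fin.castLE (by norm_num) i, Fin.castLE (by norm_num) j, 3, 4],
    (strictMono_fin_four_iff _).2 ⟨hij, by simp [Fin.lt_def], by simp [Fin.lt_def]⟩, ?_⟩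
  rw [canonicalCopy_starS'_iff]
  exact hx

def smallerEndpointParity {n : ℕ} (e : Sym2 (Fin n)) : ℕ := e.inf.val % 2

theorem not_hasCanonicalCopy_starS_five : ¬ HasCanonicalCopy starS 5 smallerEndpointParity := by
  rintro ⟨f, hf, hc⟩
  rw [strictMono_fin_four_iff, Fin.lt_def, Fin.lt_def, Fin.lt_def] at hf
  rw [canonicalCopy_starS_iff] at hc
  simp only [smallerEndpointParity, Sym2.inf_mk, Fin.coe_min] at hc
  omega

theorem not_hasCanonicalCopy_starS'_four : ¬ HasCanonicalCopy starS' 4 smallerEndpointParity := by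
  rintro ⟨f, hf, hc⟩
  rw [strictMono_fin_four_iff, Fin.lt_def, Fin.lt_def, Fin.lt_def] at hf
  rw [canonicalCopy_starS'_iff] at hc
  simp only [smallerEndpointParity, Sym2.inf_mk, Fin.coe_min] at hc
  omega

/-- ER(S) = 6 and ER(S') = 5. -/
theorem ER_ordered_stars :
    ((∀ χ : Sym2 (Fin 6) → ℕ, HasCanonicalCopy starS 6 χ) ∧
      (∃ χ : Sym2 (Fin 5) → ℕ, ¬ HasCanonicalCopy starS 5 χ)) ∧
    ((∀ χ : Sym2 (Fin 5) → ℕ, HasCanonicalCopy starS' 5 χ) ∧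
      (∃ χ : Sym2 (Fin 4) → ℕ, ¬ HasCanonicalCopy starS' 4 χ)) :=
  ⟨⟨hasCanonicalCopy_starS_six, smallerEndpointParity, not_hasCanonicalCopy_starS_five⟩,
    ⟨hasCanonicalCopy_starS'_five, smallerEndpointParity, not_hasCanonicalCopy_starS'_four⟩⟩
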